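/- arXiv:0905.0305 — 3 statements merged into one kernel-verified Lean document; each statement's English description precedes it below -/
import Mathlib

section
/- Let F be a countable family of homeomorphisms of a second-countable Baire space X such that for every x in some residual F-invariant set R, the semigroup orbit of x is dense. Then for each x ∈ R there is a branch of an orbit of the iterated function system IFS(F) starting at x which is dense in X; in particular IFS(F) is transitive. -/
/-!
Enumerate a countable base `U 0, U 1, …`. Since the semigroup orbit of every point of `R` is
dense and `R` is invariant, from any point of `R` a nonempty word in `F` leads to a point of `R`
inside any given `U n`. Following such words towards `U 0`, `U 1`, … in turn and listing all the
intermediate points yields a branch from `x` that meets every `U n`.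
-/

open Set Relation

section Chains

variable {α : Type*} {r : α → α → Prop}

theorem Relation.TransGen.exists_chain {a b : α} (h : TransGen r a b) :
    ∃ k, 0 < k ∧ ∃ c : ℕ → α, c 0 = a ∧ c k = b ∧ ∀ i < k, r (c i) (c (i + 1)) := by
  induction h with
  | @single b hab =>
    exact ⟨1, one_pos, fun i => if i = 0 then a else b, rfl, rfl,
      fun i hi => by simpa [Nat.lt_one_iff.1 hi] using hab⟩
  | @tail b d _ hbd ih =>
    obtain ⟨k, hk, c, hc0, hck, hc⟩ := ih
    refine ⟨k + 1, k.succ_pos, fun i => if i ≤ k then c i else d, by simp [hc0], by simp,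
      fun i hi => ?_⟩
    rcases (Nat.lt_succ_iff.1 hi).lt_or_eq with hi | rfl
    · simpa [hi.le, Nat.succ_le_of_lt hi] using hc i hi
    · simpa [hck] using hbd

/-- Moves from position `(n, i)`, the `i`-th point of the `n`-th of a sequence of chains of
lengths `k`, to the next position of their concatenation. -/
def concatNext (k : ℕ → ℕ) (s : ℕ × ℕ) : ℕ × ℕ :=
  if s.2 + 1 < k s.1 then (s.1, s.2 + 1) else (s.1 + 1, 0)

theorem exists_seq_of_chains (k : ℕ → ℕ) (hk : ∀ n, 0 < k n) (c : ℕ → ℕ → α)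
    (hc : ∀ n, ∀ i < k n, r (c n i) (c n (i + 1))) (hglue : ∀ n, c n (k n) = c (n + 1) 0) :
    ∃ o : ℕ → α, o 0 = c 0 0 ∧ (∀ m, r (o m) (o (m + 1))) ∧ ∀ n, c n 0 ∈ range o := by
  let pos : ℕ → ℕ × ℕ := fun m => (concatNext k)^[m] (0, 0)
  have pos_succ (m : ℕ) : pos (m + 1) = concatNext k (pos m) :=
    Function.iterate_succ_apply' _ _ _
  have pos_lt (m : ℕ) : (pos m).2 < k (pos m).1 := by
    induction m with
    | zero => exact hk 0
    | succ m ih =>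
      rw [pos_succ, concatNext]
      split_ifs with h
      exacts [h, hk _]
  have c_pos_succ (m : ℕ) : c (pos (m + 1)).1 (pos (m + 1)).2 = c (pos m).1 ((pos m).2 + 1) := by
    rw [pos_succ, concatNext]
    split_ifs with h
    · rfl
    -- the end of a chain is glued to the start of the next one
    · rw [← hglue, show (pos m).2 + 1 = k (pos m).1 by have := pos_lt m; omega]
  have pos_add {m n : ℕ} (hm : pos m = (n, 0)) : ∀ j < k n, pos (m + j) = (n, j) := by
    intro j
    induction j with
    | zero => simpa using fun _ => hm
    | succ j ih =>
      intro hj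
      rw [← add_assoc, pos_succ, ih (by omega), concatNext]
      simp [hj]
  have pos_surj (n : ℕ) : ∃ m, pos m = (n, 0) := by
    induction n with
    | zero => exact ⟨0, rfl⟩
    | succ n ih =>
      obtain ⟨m, hm⟩ := ih
      obtain ⟨j, hj⟩ := Nat.exists_eq_add_of_lt (hk n)
      refine ⟨m + j + 1, ?_⟩
      rw [pos_succ, pos_add hm j (by omega), concatNext]
      simp [hj]
  refine ⟨fun m => c (pos m).1 (pos m).2, rfl, fun m => ?_, fun n => ?_⟩
  · simpa only [c_pos_succ] using hc _ _ (pos_lt m)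
  · obtain ⟨m, hm⟩ := pos_surj n
    exact ⟨m, by simp [hm]⟩

theorem exists_seq_through_of_transGen (p : ℕ → α) (hp : ∀ n, TransGen r (p n) (p (n + 1))) :
    ∃ o : ℕ → α, o 0 = p 0 ∧ (∀ m, r (o m) (o (m + 1))) ∧ range p ⊆ range o := by
  choose k hk c hc0 hck hc using fun n => (hp n).exists_chain
  obtain ⟨o, ho0, ho, hco⟩ := exists_seq_of_chains k hk c hc fun n => by rw [hck, hc0]
  refine ⟨o, by rw [ho0, hc0], ho, ?_⟩
  rintro _ ⟨n, rfl⟩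
  simpa only [hc0] using hco n

theorem exists_seq_visiting (S : Set α) (U : ℕ → Set α)
    (h : ∀ y ∈ S, ∀ n, ∃ z ∈ S ∩ U n, TransGen r y z) {x : α} (hx : x ∈ S) :
    ∃ o : ℕ → α, o 0 = x ∧ (∀ m, r (o m) (o (m + 1))) ∧ ∀ n, (range o ∩ U n).Nonempty := by
  choose! z hz hyz using h
  let p : ℕ → α := fun n => Nat.rec x (fun n y => z y n) n
  have hpS (n : ℕ) : p n ∈ S := by
    induction n with
    | zero => exact hx
    | succ n ih => exact (hz _ ih n).1
  obtain ⟨o, ho0, ho, hpo⟩ :=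
    exists_seq_through_of_transGen p fun n => hyz _ (hpS n) n
  exact ⟨o, ho0, ho, fun n => ⟨p (n + 1), hpo (mem_range_self (n + 1)), (hz _ (hpS n) n).2⟩⟩

theorem exists_seq_denseRange [TopologicalSpace α] [SecondCountableTopology α] (S : Set α)
    (h : ∀ y ∈ S, ∀ U, IsOpen U → U.Nonempty → ∃ z ∈ S ∩ U, TransGen r y z) {x : α}
    (hx : x ∈ S) : ∃ o : ℕ → α, o 0 = x ∧ (∀ m, r (o m) (o (m + 1))) ∧ Dense (range o) := by
  have hB := TopologicalSpace.isBasis_countableBasis α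
  have hBne : (TopologicalSpace.countableBasis α).Nonempty := by
    obtain ⟨B, hBmem, -⟩ := mem_sUnion.1 (hB.sUnion_eq.symm ▸ mem_univ x)
    exact ⟨B, hBmem⟩
  obtain ⟨U, hU⟩ := (TopologicalSpace.countable_countableBasis α).exists_eq_range hBne
  have hU_mem (n : ℕ) : U n ∈ TopologicalSpace.countableBasis α := hU ▸ mem_range_self n
  have hU_nonempty (n : ℕ) : (U n).Nonempty := nonempty_iff_ne_empty.2 <|
    ne_of_mem_of_not_mem (hU_mem n) (TopologicalSpace.empty_notMem_countableBasis α)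
  obtain ⟨o, ho0, ho, hoU⟩ := exists_seq_visiting S U
    (fun y hy n => h y hy (U n) (hB.isOpen (hU_mem n)) (hU_nonempty n)) hx
  refine ⟨o, ho0, ho, hB.dense_iff.2 ?_⟩
  rintro _ hV -
  obtain ⟨n, rfl⟩ := hU ▸ hV
  exact inter_comm (range o) _ ▸ hoU n

end Chains

section Semigroup

variable {M X : Type*} [Monoid M] [MulAction M X] {F : Set M} {g : M}

theorem transGen_smul_of_mem_closure (hg : g ∈ Subsemigroup.closure F) (y : X) :
    TransGen (fun y z => ∃ f ∈ F, z = f • y) y (g • y) := by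
  induction hg using Subsemigroup.closure_induction generalizing y with
  | mem f hf => exact .single ⟨f, hf, rfl⟩
  | mul a b _ _ iha ihb => simpa only [mul_smul] using (ihb y).trans (iha (b • y))

theorem mapsTo_smul_of_mem_closure {R : Set X} (hF : ∀ f ∈ F, MapsTo (f • ·) R R)
    (hg : g ∈ Subsemigroup.closure F) : MapsTo (g • ·) R R := by
  induction hg using Subsemigroup.closure_induction with
  | mem f hf => exact hF f hf
  | mul a b _ _ iha ihb => simpa only [Function.comp_def, mul_smul] using iha.comp ihb

end Semigroup

theorem exists_dense_branch_from_residual_general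
    {X : Type*} [TopologicalSpace X] [SecondCountableTopology X]
    (F : Set (Equiv.Perm X))
    (R : Set X)
    (hinv : ∀ f ∈ F, (f : Equiv.Perm X) '' R = R)
    (hdense : ∀ x ∈ R,
      Dense {y | ∃ f ∈ Subsemigroup.closure F, (f : Equiv.Perm X) x = y}) :
    ∀ x ∈ R, ∃ o : ℕ → X, o 0 = x ∧
      (∀ n, ∃ f ∈ F, o (n + 1) = (f : Equiv.Perm X) (o n)) ∧
      Dense (Set.range o) := by
  have hmaps (f : Equiv.Perm X) (hf : f ∈ Subsemigroup.closure F) : MapsTo f R R :=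
    mapsTo_smul_of_mem_closure (fun f hf => mapsTo_iff_image_subset.2 (hinv f hf).le) hf
  refine fun x hx =>
    exists_seq_denseRange (r := fun y z => ∃ f ∈ F, z = f y) R (fun y hy U hU hUne => ?_) hx
  obtain ⟨_, ⟨g, hg, rfl⟩, hgU⟩ := (hdense y hy).exists_mem_open hU hUne
  exact ⟨g y, ⟨hmaps g hg hy, hgU⟩, transGen_smul_of_mem_closure hg y⟩

/-- If `F` is a countable family of homeomorphisms of a second-countable Baire
space `X`, `R` a residual `F`-invariant set such that every `x ∈ R` has dense semigroup
orbit, then from every `x ∈ R` there starts a branch of an orbit of `IFS(F)` (a sequence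
`o` with `o 0 = x` and `o (n+1) = f_n (o n)` with `f_n ∈ F`) which is dense in `X`;
in particular `IFS(F)` is transitive. -/
theorem exists_dense_branch_from_residual
    {X : Type*} [TopologicalSpace X] [SecondCountableTopology X] [BaireSpace X]
    (F : Set (Equiv.Perm X))
    (hFcont : ∀ f ∈ F, Continuous f ∧ Continuous f.symm)
    (hFcount : F.Countable)
    (R : Set X) (hR : R ∈ residual X)
    (hinv : ∀ f ∈ F, (f : Equiv.Perm X) '' R = R)
    (hdense : ∀ x ∈ R,
      Dense {y | ∃ f ∈ Subsemigroup.closure F, (f : Equiv.Perm X) x = y}) :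
    ∀ x ∈ R, ∃ o : ℕ → X, o 0 = x ∧
      (∀ n, ∃ f ∈ F, o (n + 1) = (f : Equiv.Perm X) (o n)) ∧
      Dense (Set.range o) :=
  exists_dense_branch_from_residual_general F R hinv hdense
end

section
/- Let K₁ and K₂ be disjoint continua in the unit square Q = [0,1]², each crossing Q horizontally (separating the two horizontal sides of Q). If for some x ∈ [0,1] the maximum height of K₁ on the vertical segment {x}×[0,1] is less than that of K₂, then K₂ is entirely contained in the connected component of Q ∖ K₁ containing the top side [0,1]×{1}; consequently the same height inequality holds for every x' ∈ [0,1]. -/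
open Set

/-- The unit square `Q = [0,1]²`. -/
def unitSq : Set (ℝ × ℝ) := Icc (0:ℝ) 1 ×ˢ Icc (0:ℝ) 1

/-- The bottom horizontal side of `Q`. -/
def botSide : Set (ℝ × ℝ) := Icc (0:ℝ) 1 ×ˢ {(0:ℝ)}

/-- The top horizontal side of `Q`. -/
def topSide : Set (ℝ × ℝ) := Icc (0:ℝ) 1 ×ˢ {(1:ℝ)}

/-- A continuum `K ⊆ Q` crosses the unit square horizontally: the two horizontal sides of
`Q` lie in different connected components of `Q ∖ K`. -/
def CrossesHorizontally (K : Set (ℝ × ℝ)) : Prop :=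
  IsCompact K ∧ IsConnected K ∧ K ⊆ unitSq ∧ Disjoint K (botSide ∪ topSide) ∧
  ∀ p ∈ botSide, ∀ q ∈ topSide,
    connectedComponentIn (unitSq \ K) p ≠ connectedComponentIn (unitSq \ K) q

/-- The maximal height of `K` over the vertical segment `{x} × [0,1]`. -/
noncomputable def maxHt (K : Set (ℝ × ℝ)) (x : ℝ) : ℝ := sSup {y : ℝ | (x, y) ∈ K}

/-!
Over `x`, the highest point of `K₂` lies above `K₁`, so a vertical segment joins it to the top
side inside `Q ∖ K₁`; being connected and disjoint from `K₁`, all of `K₂` lies in the top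
component of `Q ∖ K₁`. Let `B` be the bottom component of `Q ∖ K₁`. Components of `Q ∖ K₁` are
relatively open in the convex set `Q`, so if `closure B` missed `K₁` then `B` would be clopen
in the connected `Q`; hence `closure B` meets `K₁`, and `closure B ∪ K₁` is a connected subset
of `Q ∖ K₂` containing the bottom side. So `K₁` lies in the bottom component of `Q ∖ K₂`, and
if `K₂` were lower than `K₁` over some `x'`, the highest point of `K₁` there would reach the
top side inside `Q ∖ K₂`.
-/

open Metric Topology Filter

theorem IsPreconnected.subset_of_mem_nhdsWithin_of_closure_inter_subset {X : Type*}
    [TopologicalSpace X] {s c : Set X} (hs : IsPreconnected s) (hcs : c ⊆ s) (hc : c.Nonempty)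
    (hopen : ∀ z ∈ c, c ∈ 𝓝[s] z) (hclosed : closure c ∩ s ⊆ c) : s ⊆ c := by
  choose! u hu_open hzu hus using fun z hz => mem_nhdsWithin.mp (hopen z hz)
  set U := ⋃ z ∈ c, u z
  have hUs : U ∩ s ⊆ c := by
    rintro w ⟨hwU, hws⟩
    obtain ⟨z, hz, hwz⟩ := mem_iUnion₂.mp hwU
    exact hus z hz ⟨hwz, hws⟩
  have hcover : s ⊆ U ∪ (closure c)ᶜ := fun w hws => by
    by_cases hw : w ∈ closure c
    · exact Or.inl (mem_biUnion (hclosed ⟨hw, hws⟩) (hzu _ (hclosed ⟨hw, hws⟩)))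
    · exact Or.inr hw
  have hdisj : s ∩ (U ∩ (closure c)ᶜ) = ∅ := by
    ext w
    simp only [mem_inter_iff, mem_compl_iff, mem_empty_iff_false, iff_false, not_and, not_not]
    exact fun hws hwU => subset_closure (hUs ⟨hwU, hws⟩)
  rcases isPreconnected_iff_subset_of_disjoint.mp hs _ _
      (isOpen_biUnion hu_open) isClosed_closure.isOpen_compl hcover hdisj with hsU | hsc
  · exact fun w hws => hUs ⟨hsU hws, hws⟩
  · obtain ⟨z, hz⟩ := hc
    exact absurd (subset_closure hz) (hsc (hcs hz))

theorem connectedComponentIn_eq_of_mem_of_mem {X : Type*} [TopologicalSpace X] {F : Set X}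
    {a b w : X} (ha : w ∈ connectedComponentIn F a) (hb : w ∈ connectedComponentIn F b) :
    connectedComponentIn F a = connectedComponentIn F b :=
  (connectedComponentIn_eq ha).trans (connectedComponentIn_eq hb).symm

section Convex

variable {E : Type*} [NormedAddCommGroup E] [NormedSpace ℝ E] {s K : Set E}

theorem Convex.connectedComponentIn_diff_mem_nhdsWithin (hs : Convex ℝ s) (hK : IsClosed K)
    {z : E} (hz : z ∈ s \ K) : connectedComponentIn (s \ K) z ∈ 𝓝[s] z := by
  obtain ⟨ε, hε, hball⟩ := Metric.isOpen_iff.mp hK.isOpen_compl z hz.2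
  refine mem_nhdsWithin_iff.mpr ⟨ε, hε, ?_⟩
  exact ((convex_ball z ε).inter hs).isPreconnected.subset_connectedComponentIn
    ⟨mem_ball_self hε, hz.1⟩ fun p hp => ⟨hp.2, hball hp.1⟩

theorem Convex.closure_connectedComponentIn_diff_inter_subset (hs : Convex ℝ s)
    (hK : IsClosed K) (z₀ : E) :
    closure (connectedComponentIn (s \ K) z₀) ∩ s ⊆ connectedComponentIn (s \ K) z₀ ∪ K := by
  rintro z ⟨hzC, hzs⟩
  by_cases hzK : z ∈ K
  · exact Or.inr hzK
  have hnhds : connectedComponentIn (s \ K) z ∈ 𝓝[connectedComponentIn (s \ K) z₀] z :=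
    nhdsWithin_mono z ((connectedComponentIn_subset _ _).trans sdiff_subset)
      (hs.connectedComponentIn_diff_mem_nhdsWithin hK ⟨hzs, hzK⟩)
  have := mem_closure_iff_nhdsWithin_neBot.mp hzC
  obtain ⟨w, hwz, hwC⟩ := Filter.nonempty_of_mem (inter_mem hnhds self_mem_nhdsWithin)
  rw [connectedComponentIn_eq_of_mem_of_mem hwC hwz]
  exact Or.inl (mem_connectedComponentIn ⟨hzs, hzK⟩)

theorem Convex.closure_connectedComponentIn_diff_inter_nonempty (hs : Convex ℝ s)
    (hK : IsClosed K) {z₀ : E} (hz₀ : z₀ ∈ s \ K)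
    (hsub : ¬ s ⊆ connectedComponentIn (s \ K) z₀) :
    (closure (connectedComponentIn (s \ K) z₀) ∩ K).Nonempty := by
  by_contra hempty
  refine hsub (hs.isPreconnected.subset_of_mem_nhdsWithin_of_closure_inter_subset
    ((connectedComponentIn_subset _ _).trans sdiff_subset) ⟨z₀, mem_connectedComponentIn hz₀⟩
    (fun z hz => ?_) fun z hz => ?_)
  · rw [connectedComponentIn_eq hz]
    exact hs.connectedComponentIn_diff_mem_nhdsWithin hK (connectedComponentIn_subset _ _ hz)
  · exact (hs.closure_connectedComponentIn_diff_inter_subset hK z₀ hz).resolve_right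
      fun hzK => hempty ⟨z, hz.1, hzK⟩

end Convex

theorem convex_unitSq : Convex ℝ unitSq := (convex_Icc _ _).prod (convex_Icc _ _)

theorem isClosed_unitSq : IsClosed unitSq := isClosed_Icc.prod isClosed_Icc

theorem isPreconnected_vertical_segment (x a b : ℝ) : IsPreconnected ({x} ×ˢ Icc a b) :=
  isPreconnected_singleton.prod isPreconnected_Icc

namespace CrossesHorizontally

variable {K K₁ K₂ : Set (ℝ × ℝ)} {x : ℝ}

theorem isClosed (h : CrossesHorizontally K) : IsClosed K := h.1.isClosed

theorem isConnected (h : CrossesHorizontally K) : IsConnected K := h.2.1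

theorem subset_unitSq (h : CrossesHorizontally K) : K ⊆ unitSq := h.2.2.1

theorem botSide_subset (h : CrossesHorizontally K) : botSide ⊆ unitSq \ K :=
  subset_sdiff.mpr ⟨prod_mono subset_rfl (singleton_subset_iff.mpr (left_mem_Icc.mpr zero_le_one)),
    (h.2.2.2.1.mono_right subset_union_left).symm⟩

theorem topSide_subset (h : CrossesHorizontally K) : topSide ⊆ unitSq \ K :=
  subset_sdiff.mpr ⟨prod_mono subset_rfl (singleton_subset_iff.mpr (right_mem_Icc.mpr zero_le_one)),
    (h.2.2.2.1.mono_right subset_union_right).symm⟩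

theorem connectedComponentIn_bot_ne_top (h : CrossesHorizontally K) :
    connectedComponentIn (unitSq \ K) ((0:ℝ), (0:ℝ)) ≠
      connectedComponentIn (unitSq \ K) ((0:ℝ), (1:ℝ)) :=
  h.2.2.2.2 _ ⟨left_mem_Icc.mpr zero_le_one, mem_singleton 0⟩ _
    ⟨left_mem_Icc.mpr zero_le_one, mem_singleton 1⟩

theorem nonempty_fiber (h : CrossesHorizontally K) (hx : x ∈ Icc (0:ℝ) 1) :
    {y : ℝ | (x, y) ∈ K}.Nonempty := by
  by_contra hK
  have hseg : {x} ×ˢ Icc (0:ℝ) 1 ⊆ unitSq \ K := by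
    rintro ⟨a, b⟩ ⟨rfl, hb⟩
    exact ⟨⟨hx, hb⟩, fun hab => hK ⟨b, hab⟩⟩
  refine h.2.2.2.2 (x, 0) ⟨hx, mem_singleton 0⟩ (x, 1) ⟨hx, mem_singleton 1⟩
    (connectedComponentIn_eq ?_)
  exact (isPreconnected_vertical_segment x 0 1).subset_connectedComponentIn
    ⟨mem_singleton x, left_mem_Icc.mpr zero_le_one⟩ hseg
    ⟨mem_singleton x, right_mem_Icc.mpr zero_le_one⟩

theorem bddAbove_fiber (h : CrossesHorizontally K) : BddAbove {y : ℝ | (x, y) ∈ K} :=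
  ⟨1, fun _ hy => (h.subset_unitSq hy).2.2⟩

theorem le_maxHt (h : CrossesHorizontally K) {y : ℝ} (hy : (x, y) ∈ K) : y ≤ maxHt K x :=
  le_csSup h.bddAbove_fiber hy

theorem maxHt_mem (h : CrossesHorizontally K) (hx : x ∈ Icc (0:ℝ) 1) : (x, maxHt K x) ∈ K :=
  (h.isClosed.preimage (Continuous.prodMk_right x)).csSup_mem (h.nonempty_fiber hx)
    h.bddAbove_fiber

theorem maxHt_mem_unitSq (h : CrossesHorizontally K) (hx : x ∈ Icc (0:ℝ) 1) :
    (x, maxHt K x) ∈ unitSq :=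
  h.subset_unitSq (h.maxHt_mem hx)

theorem mem_connectedComponentIn_top_of_maxHt_lt (h : CrossesHorizontally K)
    (hx : x ∈ Icc (0:ℝ) 1) {y : ℝ} (hy : maxHt K x < y) (hy1 : y ≤ 1) :
    (x, y) ∈ connectedComponentIn (unitSq \ K) ((0:ℝ), (1:ℝ)) := by
  have hy0 : 0 ≤ y := (h.maxHt_mem_unitSq hx).2.1.trans hy.le
  have hseg : {x} ×ˢ Icc y 1 ⊆ unitSq \ K := by
    rintro ⟨a, b⟩ ⟨rfl, hb⟩
    exact ⟨⟨hx, hy0.trans hb.1, hb.2⟩, fun hab => (h.le_maxHt hab).not_gt (hy.trans_le hb.1)⟩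
  have hconn : IsPreconnected ({x} ×ˢ Icc y 1 ∪ topSide) :=
    (isPreconnected_vertical_segment x y 1).union (x, 1)
      ⟨mem_singleton x, right_mem_Icc.mpr hy1⟩ ⟨hx, mem_singleton 1⟩
      (isPreconnected_Icc.prod isPreconnected_singleton)
  exact hconn.subset_connectedComponentIn
    (Or.inr ⟨left_mem_Icc.mpr zero_le_one, mem_singleton 1⟩)
    (union_subset hseg h.topSide_subset) (Or.inl ⟨mem_singleton x, left_mem_Icc.mpr hy1⟩)

theorem subset_connectedComponentIn_top_of_maxHt_lt (h₁ : CrossesHorizontally K₁)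
    (h₂ : CrossesHorizontally K₂) (hd : Disjoint K₁ K₂) (hx : x ∈ Icc (0:ℝ) 1)
    (hlt : maxHt K₁ x < maxHt K₂ x) :
    K₂ ⊆ connectedComponentIn (unitSq \ K₁) ((0:ℝ), (1:ℝ)) := by
  rw [connectedComponentIn_eq
    (h₁.mem_connectedComponentIn_top_of_maxHt_lt hx hlt (h₂.maxHt_mem_unitSq hx).2.2)]
  exact h₂.isConnected.isPreconnected.subset_connectedComponentIn (h₂.maxHt_mem hx)
    fun p hp => ⟨h₂.subset_unitSq hp, disjoint_right.mp hd hp⟩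

theorem subset_connectedComponentIn_bot_of_subset_top (h₁ : CrossesHorizontally K₁)
    (hd : Disjoint K₁ K₂) (hK₂ : K₂ ⊆ connectedComponentIn (unitSq \ K₁) ((0:ℝ), (1:ℝ))) :
    K₁ ⊆ connectedComponentIn (unitSq \ K₂) ((0:ℝ), (0:ℝ)) := by
  set B := connectedComponentIn (unitSq \ K₁) ((0:ℝ), (0:ℝ))
  have h00 : ((0:ℝ), (0:ℝ)) ∈ unitSq \ K₁ :=
    h₁.botSide_subset ⟨left_mem_Icc.mpr zero_le_one, mem_singleton 0⟩
  have hmeet : (closure B ∩ K₁).Nonempty :=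
    convex_unitSq.closure_connectedComponentIn_diff_inter_nonempty h₁.isClosed h00 fun hQ =>
      h₁.connectedComponentIn_bot_ne_top (connectedComponentIn_eq (hQ (h₁.topSide_subset
        ⟨left_mem_Icc.mpr zero_le_one, mem_singleton 1⟩).1))
  have hBK₂ : Disjoint B K₂ := disjoint_left.mpr fun p hpB hpK₂ =>
    h₁.connectedComponentIn_bot_ne_top (connectedComponentIn_eq_of_mem_of_mem hpB (hK₂ hpK₂))
  have hconn : IsPreconnected (closure B ∪ K₁) :=
    ((isConnected_connectedComponentIn_iff.mpr h00).closure.union hmeet h₁.isConnected).2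
  have hsub : closure B ∪ K₁ ⊆ unitSq \ K₂ := by
    rintro p (hp | hp)
    · have hpQ : p ∈ unitSq := closure_minimal
        ((connectedComponentIn_subset _ _).trans sdiff_subset) isClosed_unitSq hp
      rcases convex_unitSq.closure_connectedComponentIn_diff_inter_subset h₁.isClosed _
          ⟨hp, hpQ⟩ with hpB | hpK₁
      · exact ⟨hpQ, disjoint_left.mp hBK₂ hpB⟩
      · exact ⟨hpQ, disjoint_left.mp hd hpK₁⟩
    · exact ⟨h₁.subset_unitSq hp, disjoint_left.mp hd hp⟩
  exact fun p hp => hconn.subset_connectedComponentIn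
    (Or.inl (subset_closure (mem_connectedComponentIn h00))) hsub (Or.inr hp)

theorem maxHt_lt_of_subset_bot (h₁ : CrossesHorizontally K₁) (h₂ : CrossesHorizontally K₂)
    (hd : Disjoint K₁ K₂) (hK₁ : K₁ ⊆ connectedComponentIn (unitSq \ K₂) ((0:ℝ), (0:ℝ)))
    (hx : x ∈ Icc (0:ℝ) 1) : maxHt K₁ x < maxHt K₂ x := by
  rcases lt_trichotomy (maxHt K₁ x) (maxHt K₂ x) with hlt | heq | hgt
  · exact hlt
  · exact absurd (heq ▸ h₂.maxHt_mem hx) (disjoint_left.mp hd (h₁.maxHt_mem hx))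
  · exact absurd (connectedComponentIn_eq_of_mem_of_mem (hK₁ (h₁.maxHt_mem hx))
      (h₂.mem_connectedComponentIn_top_of_maxHt_lt hx hgt (h₁.maxHt_mem_unitSq hx).2.2))
      h₂.connectedComponentIn_bot_ne_top

end CrossesHorizontally

/-- If `K₁`, `K₂` are disjoint continua crossing `Q` horizontally and for some
`x ∈ [0,1]` the maximal height of `K₁` over `{x} × [0,1]` is less than that of `K₂`, then
`K₂` is contained in the connected component of `Q ∖ K₁` containing the top side, and the
same height inequality holds for every `x' ∈ [0,1]`. -/
theorem crossing_continua_nested_of_maxHt_lt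
    (K₁ K₂ : Set (ℝ × ℝ))
    (h₁ : CrossesHorizontally K₁) (h₂ : CrossesHorizontally K₂)
    (hd : Disjoint K₁ K₂)
    (x : ℝ) (hx : x ∈ Icc (0:ℝ) 1)
    (hlt : maxHt K₁ x < maxHt K₂ x) :
    K₂ ⊆ connectedComponentIn (unitSq \ K₁) ((0:ℝ), (1:ℝ)) ∧
    ∀ x' ∈ Icc (0:ℝ) 1, maxHt K₁ x' < maxHt K₂ x' := by
  have hK₂ := h₁.subset_connectedComponentIn_top_of_maxHt_lt h₂ hd hx hlt
  have hK₁ := h₁.subset_connectedComponentIn_bot_of_subset_top hd hK₂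
  exact ⟨hK₂, fun _ => h₁.maxHt_lt_of_subset_bot h₂ hd hK₁⟩
end

section
/- Let {K_m} be a sequence of pairwise disjoint frontiers in an annulus A that is monotone with respect to the order K ≤ K' iff K⁻ ⊂ K'⁻ (where K⁻ is the lower complementary annular component), and suppose K_m converges in the Hausdorff metric to a compact set K. Then K has empty interior; indeed if the sequence is increasing, K = ∂(⋃_m K_m⁻). -/
/-!
If the lower pieces `K⁻ₘ` increase, disjointness of the frontiers gives `Kₘ ⊆ K⁻ₙ` and
`Kₙ ⊆ K⁺ₘ` for `m < n`. The first inclusion puts the Hausdorff limit `L` inside the closure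
of `U = ⋃ K⁻ₘ`; the second puts it inside `closure K⁺ₘ = K⁺ₘ ∪ Kₘ`, which misses `K⁻ₘ`.
Conversely, a point of `closure U \ U` lies in every `K⁺ₘ`, and a short segment from it to
a nearby point of `K⁻ₘ` must cross `Kₘ`, so it is a limit of points of the `Kₘ`.
The boundary of any set has empty interior. If instead the `K⁻ₘ` decrease, the `K⁺ₘ`
increase, and the same argument runs with the two sides exchanged.
-/

open Set Topology Filter

noncomputable section

/-- The circle `ℝ/ℤ`. -/
abbrev Circ : Type := AddCircle (1 : ℝ)

/-- The open annulus `S¹ × ℝ`. -/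
abbrev Ann : Type := Circ × ℝ

/-- The standard closed annulus `S¹ × [0,1]` inside `Ann`. -/
def stdA : Set Ann := {p | p.2 ∈ Icc (0:ℝ) 1}

/-- The lower boundary circle of the standard closed annulus. -/
def bdLow : Set Ann := {p | p.2 = 0}

/-- The upper boundary circle of the standard closed annulus. -/
def bdHigh : Set Ann := {p | p.2 = 1}

/-- The half-open model annulus `S¹ × [0,1)`. -/
def halfOpenAnn : Set Ann := {p | p.2 ∈ Ico (0:ℝ) 1}

/-- `W` has exactly two connected components, `Km` and `Kp`. -/
def TwoComponents (W Km Kp : Set Ann) : Prop :=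
  Km ≠ Kp ∧ Km ∪ Kp = W ∧
  (∃ x ∈ W, connectedComponentIn W x = Km) ∧
  (∃ x ∈ W, connectedComponentIn W x = Kp) ∧
  ∀ x ∈ W, connectedComponentIn W x = Km ∨ connectedComponentIn W x = Kp

/-- `K` is an annular continuum in the standard closed annulus, with complementary
pieces `Km` (containing the lower boundary) and `Kp` (containing the upper boundary),
each homeomorphic to a (half-open) annulus. -/
def AnnularContinuum (K Km Kp : Set Ann) : Prop :=
  IsCompact K ∧ IsConnected K ∧ K ⊆ stdA ∧
  TwoComponents (stdA \ K) Km Kp ∧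
  bdLow ⊆ Km ∧ bdHigh ⊆ Kp ∧
  Nonempty (↥Km ≃ₜ ↥halfOpenAnn) ∧ Nonempty (↥Kp ≃ₜ ↥halfOpenAnn)

/-- The boundary in the standard closed annulus of a relatively open subset. -/
def relBd (E : Set Ann) : Set Ann := closure E \ E

/-- `K` is a frontier: an annular continuum which coincides with the boundary of each of
its two complementary pieces. -/
def IsFrontierSet (K : Set Ann) : Prop :=
  ∃ Km Kp, AnnularContinuum K Km Kp ∧ K = relBd Km ∧ K = relBd Kp

open Metric

section HausdorffLimit

variable {α ι : Type*} {l : Filter ι} {K : ι → Set α} {L : Set α}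

theorem subset_closure_of_tendsto_hausdorffEDist [PseudoEMetricSpace α] [l.NeBot] {C : Set α}
    (hlim : Tendsto (fun i => hausdorffEDist (K i) L) l (𝓝 0)) (hC : ∀ᶠ i in l, K i ⊆ C) :
    L ⊆ closure C := by
  intro x hx
  rw [EMetric.mem_closure_iff]
  intro ε hε
  obtain ⟨i, hi, hKC⟩ := ((hlim.eventually_lt_const hε).and hC).exists
  have hx_near : infEDist x (K i) < ε :=
    (infEDist_le_hausdorffEDist_of_mem hx).trans_lt (by rwa [hausdorffEDist_comm])
  obtain ⟨w, hw, hxw⟩ := infEDist_lt_iff.mp hx_near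
  exact ⟨w, hKC hw, hxw⟩

theorem mem_closure_of_tendsto_hausdorffEDist [PseudoMetricSpace α] {x : α}
    (hlim : Tendsto (fun i => hausdorffEDist (K i) L) l (𝓝 0))
    (hx : ∀ ε > 0, ∃ᶠ i in l, ∃ w ∈ K i, dist x w < ε) : x ∈ closure L := by
  rw [Metric.mem_closure_iff]
  intro ε hε
  have hε2 : 0 < ε / 2 := half_pos hε
  obtain ⟨i, ⟨w, hw, hxw⟩, hi⟩ :=
    ((hx _ hε2).and_eventually (hlim.eventually_lt_const (ENNReal.ofReal_pos.mpr hε2))).exists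
  obtain ⟨y, hy, hwy⟩ := exists_edist_lt_of_hausdorffEDist_lt hw hi
  refine ⟨y, hy, ?_⟩
  calc dist x y ≤ dist x w + dist w y := dist_triangle _ _ _
    _ < ε / 2 + ε / 2 := add_lt_add hxw (edist_lt_ofReal.mp hwy)
    _ = ε := add_halves ε

end HausdorffLimit

theorem interior_relBd_eq_empty (U : Set Ann) : interior (relBd U) = ∅ := by
  rw [relBd, sdiff_eq, interior_inter, interior_compl]
  exact (disjoint_compl_right.mono_left interior_subset).inter_eq

theorem UnitAddCircle.exists_coe_eq_abs_eq_norm (v : UnitAddCircle) :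
    ∃ d : ℝ, (d : UnitAddCircle) = v ∧ |d| = ‖v‖ := by
  obtain ⟨r, rfl⟩ := QuotientAddGroup.mk_surjective v
  refine ⟨r - round r, ?_, ?_⟩
  · rw [AddCircle.coe_sub, sub_eq_self, AddCircle.coe_eq_zero_iff]
    exact ⟨round r, by simp⟩
  · exact UnitAddCircle.norm_eq.symm

theorem exists_isPreconnected_subset_stdA_closedBall {x z : Ann} (hx : x ∈ stdA) (hz : z ∈ stdA) :
    ∃ C, IsPreconnected C ∧ x ∈ C ∧ z ∈ C ∧ C ⊆ stdA ∧ C ⊆ closedBall x (dist z x) := by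
  -- Project the segment between lifts of `x` and `z` to `ℝ × ℝ` that are exactly as close.
  obtain ⟨a, ha⟩ := QuotientAddGroup.mk_surjective x.1
  obtain ⟨d, hd, hdn⟩ := UnitAddCircle.exists_coe_eq_abs_eq_norm (z.1 - x.1)
  let π : ℝ × ℝ → Ann := Prod.map (↑) id
  have hπ_cont : Continuous π := (AddCircle.continuous_mk' 1).prodMap continuous_id
  have hπ_dist (u v : ℝ × ℝ) : dist (π u) (π v) ≤ dist u v := by
    refine max_le_max ?_ le_rfl
    change dist (u.1 : Circ) v.1 ≤ dist u.1 v.1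
    rw [dist_eq_norm, dist_eq_norm, ← AddCircle.coe_sub]
    exact QuotientAddGroup.norm_mk_le_norm
  set p : ℝ × ℝ := (a, x.2)
  set q : ℝ × ℝ := (a + d, z.2)
  have hp : π p = x := Prod.ext ha rfl
  have hq : π q = z := by
    refine Prod.ext ?_ rfl
    simp only [π, q, Prod.map_fst, AddCircle.coe_add, ha, hd, add_sub_cancel]
  have hpq : dist q p = dist z x := by
    rw [Prod.dist_eq, Prod.dist_eq, dist_eq_norm z.1, ← hdn, Real.dist_eq, add_sub_cancel_left]
  have hstrip : Convex ℝ (univ ×ˢ Icc (0 : ℝ) 1 : Set (ℝ × ℝ)) := convex_univ.prod (convex_Icc 0 1)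
  refine ⟨π '' segment ℝ p q, (convex_segment p q).isPreconnected.image π hπ_cont.continuousOn,
    hp ▸ mem_image_of_mem π (left_mem_segment ℝ p q),
    hq ▸ mem_image_of_mem π (right_mem_segment ℝ p q), ?_, ?_⟩
  · rintro _ ⟨w, hw, rfl⟩
    exact (hstrip.segment_subset (x := p) (y := q) ⟨trivial, hx⟩ ⟨trivial, hz⟩ hw).2
  · rintro _ ⟨w, hw, rfl⟩
    have hwp : dist w p ≤ dist q p :=
      (convex_closedBall p _).segment_subset (mem_closedBall_self dist_nonneg)
        (mem_closedBall.2 le_rfl) hw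
    rw [mem_closedBall, ← hpq, ← hp]
    exact (hπ_dist w p).trans hwp

namespace TwoComponents

variable {W A B : Set Ann}

theorem symm (h : TwoComponents W A B) : TwoComponents W B A :=
  ⟨h.1.symm, union_comm A B ▸ h.2.1, h.2.2.2.1, h.2.2.1, fun x hx => (h.2.2.2.2 x hx).symm⟩

theorem connectedComponentIn_eq_left (h : TwoComponents W A B) {x : Ann} (hx : x ∈ A) :
    connectedComponentIn W x = A := by
  obtain ⟨a, -, rfl⟩ := h.2.2.1
  exact (connectedComponentIn_eq hx).symm

theorem disjoint (h : TwoComponents W A B) : Disjoint A B :=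
  Set.disjoint_left.mpr fun _ hA hB =>
    h.1 ((h.connectedComponentIn_eq_left hA).symm.trans (h.symm.connectedComponentIn_eq_left hB))

end TwoComponents

/-- The part of "`K` is a frontier with complementary pieces `E` and `F`" that is symmetric
in `E` and `F`. -/
structure IsFrontierTriple (K E F : Set Ann) : Prop where
  subset_stdA : K ⊆ stdA
  twoComponents : TwoComponents (stdA \ K) E F
  eq_relBd_left : K = relBd E
  eq_relBd_right : K = relBd F

namespace IsFrontierTriple

section

variable {K E F : Set Ann}

theorem symm (h : IsFrontierTriple K E F) : IsFrontierTriple K F E :=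
  ⟨h.subset_stdA, h.twoComponents.symm, h.eq_relBd_right, h.eq_relBd_left⟩

theorem union_eq (h : IsFrontierTriple K E F) : E ∪ F = stdA \ K := h.twoComponents.2.1

theorem left_subset_stdA (h : IsFrontierTriple K E F) : E ⊆ stdA :=
  h.union_eq ▸ subset_union_left |>.trans sdiff_subset

theorem disjoint_left (h : IsFrontierTriple K E F) : Disjoint K E :=
  h.eq_relBd_left ▸ disjoint_sdiff_left

theorem closure_left (h : IsFrontierTriple K E F) : closure E = E ∪ K := by
  rw [h.eq_relBd_left, relBd, union_sdiff_cancel subset_closure]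

theorem subset_closure_left (h : IsFrontierTriple K E F) : K ⊆ closure E :=
  h.closure_left ▸ subset_union_right

theorem inter_nonempty_of_isPreconnected (h : IsFrontierTriple K E F) {C : Set Ann}
    (hC : IsPreconnected C) (hCA : C ⊆ stdA) {x z : Ann} (hxC : x ∈ C) (hzC : z ∈ C)
    (hxF : x ∈ F) (hzE : z ∈ E) : (C ∩ K).Nonempty := by
  by_contra hCK
  have hCW : C ⊆ stdA \ K := fun w hw => ⟨hCA hw, fun hwK => hCK ⟨w, hw, hwK⟩⟩
  have hCF : C ⊆ F :=
    h.twoComponents.symm.connectedComponentIn_eq_left hxF ▸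
      hC.subset_connectedComponentIn hxC hCW
  exact h.twoComponents.disjoint.notMem_of_mem_left hzE (hCF hzC)

end

variable {K E F : ℕ → Set Ann}

theorem monotone_right_of_antitone_left (h : ∀ m, IsFrontierTriple (K m) (E m) (F m))
    (hE : Antitone E) : Monotone F := by
  intro m n hmn w hw
  have hwEm : w ∉ E m := (h m).twoComponents.disjoint.notMem_of_mem_right hw
  have hwKm : w ∉ K m := (h m).symm.disjoint_left.notMem_of_mem_right hw
  have hwKn : w ∉ K n := fun hwKn => by
    have := (closure_mono (hE hmn)) ((h n).subset_closure_left hwKn)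
    rw [(h m).closure_left] at this
    exact this.elim hwEm hwKm
  have hwEn : w ∉ E n := fun hwEn => hwEm (hE hmn hwEn)
  have hw' : w ∈ E n ∪ F n := (h n).union_eq ▸ ⟨(h m).symm.left_subset_stdA hw, hwKn⟩
  exact hw'.resolve_left hwEn

section Monotone

variable {L : Set Ann}

theorem subset_left_of_lt (h : ∀ m, IsFrontierTriple (K m) (E m) (F m))
    (hdisj : Pairwise (Function.onFun Disjoint K)) (hE : Monotone E) {m n : ℕ} (hmn : m < n) :
    K m ⊆ E n := by
  intro w hw
  have hw' : w ∈ E n ∪ K n :=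
    (h n).closure_left ▸ closure_mono (hE hmn.le) ((h m).subset_closure_left hw)
  exact hw'.resolve_right ((hdisj hmn.ne).notMem_of_mem_left hw)

theorem subset_right_of_lt (h : ∀ m, IsFrontierTriple (K m) (E m) (F m))
    (hdisj : Pairwise (Function.onFun Disjoint K)) (hE : Monotone E) {m n : ℕ} (hmn : m < n) :
    K n ⊆ F m := by
  intro w hw
  have hw' : w ∈ E m ∪ F m :=
    (h m).union_eq ▸ ⟨(h n).subset_stdA hw, (hdisj hmn.ne').notMem_of_mem_left hw⟩
  exact hw'.resolve_left fun hwE => (h n).disjoint_left.notMem_of_mem_left hw (hE hmn.le hwE)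

theorem subset_relBd_iUnion_of_tendsto (h : ∀ m, IsFrontierTriple (K m) (E m) (F m))
    (hdisj : Pairwise (Function.onFun Disjoint K)) (hE : Monotone E)
    (hlim : Tendsto (fun m => hausdorffEDist (K m) L) atTop (𝓝 0)) :
    L ⊆ relBd (⋃ m, E m) := by
  intro x hx
  refine ⟨subset_closure_of_tendsto_hausdorffEDist hlim (Eventually.of_forall fun m =>
    (subset_left_of_lt h hdisj hE m.lt_succ_self).trans (subset_iUnion E _)) hx, ?_⟩
  rintro ⟨_, ⟨m, rfl⟩, hxE⟩
  have hLF : L ⊆ closure (F m) := subset_closure_of_tendsto_hausdorffEDist hlim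
    ((eventually_gt_atTop m).mono fun n hmn => subset_right_of_lt h hdisj hE hmn)
  have hx' : x ∈ F m ∪ K m := (h m).symm.closure_left ▸ hLF hx
  exact hx'.elim ((h m).twoComponents.disjoint.notMem_of_mem_left hxE)
    ((h m).disjoint_left.notMem_of_mem_right hxE)

theorem mem_right_of_mem_relBd_iUnion (h : ∀ m, IsFrontierTriple (K m) (E m) (F m))
    (hdisj : Pairwise (Function.onFun Disjoint K)) (hE : Monotone E) {x : Ann}
    (hx : x ∈ relBd (⋃ m, E m)) (m : ℕ) : x ∈ F m := by
  obtain ⟨hxcl, hxU⟩ := hx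
  have hxA : x ∈ stdA := closure_minimal (iUnion_subset fun m => (h m).left_subset_stdA)
    (isClosed_Icc.preimage continuous_snd) hxcl
  have hxK : x ∉ K m := fun hxK =>
    hxU (mem_iUnion.mpr ⟨m + 1, subset_left_of_lt h hdisj hE m.lt_succ_self hxK⟩)
  have hx' : x ∈ E m ∪ F m := (h m).union_eq ▸ ⟨hxA, hxK⟩
  exact hx'.resolve_left fun hxE => hxU (mem_iUnion.mpr ⟨m, hxE⟩)

theorem relBd_iUnion_subset_closure_of_tendsto (h : ∀ m, IsFrontierTriple (K m) (E m) (F m))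
    (hdisj : Pairwise (Function.onFun Disjoint K)) (hE : Monotone E)
    (hlim : Tendsto (fun m => hausdorffEDist (K m) L) atTop (𝓝 0)) :
    relBd (⋃ m, E m) ⊆ closure L := by
  intro x hx
  have hxF := mem_right_of_mem_relBd_iUnion h hdisj hE hx
  refine mem_closure_of_tendsto_hausdorffEDist hlim fun ε hε => ?_
  obtain ⟨z, hzU, hxz⟩ := Metric.mem_closure_iff.mp hx.1 ε hε
  obtain ⟨m₀, hzE⟩ := mem_iUnion.mp hzU
  obtain ⟨C, hC, hxC, hzC, hCA, hCx⟩ := exists_isPreconnected_subset_stdA_closedBall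
    ((h 0).symm.left_subset_stdA (hxF 0)) ((h m₀).left_subset_stdA hzE)
  refine (eventually_ge_atTop m₀).frequently.mono fun m hm => ?_
  obtain ⟨w, hwC, hwK⟩ :=
    (h m).inter_nonempty_of_isPreconnected hC hCA hxC hzC (hxF m) (hE hm hzE)
  refine ⟨w, hwK, ?_⟩
  calc dist x w = dist w x := dist_comm x w
    _ ≤ dist z x := hCx hwC
    _ = dist x z := dist_comm z x
    _ < ε := hxz

theorem eq_relBd_iUnion_of_tendsto (h : ∀ m, IsFrontierTriple (K m) (E m) (F m))
    (hdisj : Pairwise (Function.onFun Disjoint K)) (hE : Monotone E) (hL : IsClosed L)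
    (hlim : Tendsto (fun m => hausdorffEDist (K m) L) atTop (𝓝 0)) :
    L = relBd (⋃ m, E m) :=
  (subset_relBd_iUnion_of_tendsto h hdisj hE hlim).antisymm
    (hL.closure_eq ▸ relBd_iUnion_subset_closure_of_tendsto h hdisj hE hlim)

end Monotone

end IsFrontierTriple

/-- Let `K m` be a sequence of pairwise disjoint frontiers in the annulus,
monotone for the order `K ≤ K'` iff `K⁻ ⊆ K'⁻`, converging in the Hausdorff metric to a
compact set `L`. Then `L` has empty interior; indeed if the sequence is increasing, `L` is
the boundary (in the annulus) of `⋃ m, (K m)⁻`. -/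
theorem hausdorff_limit_of_monotone_frontiers_empty_interior
    (K Km Kp : ℕ → Set Ann)
    (hfr : ∀ m, AnnularContinuum (K m) (Km m) (Kp m) ∧
      K m = relBd (Km m) ∧ K m = relBd (Kp m))
    (hdisj : Pairwise (Function.onFun Disjoint K))
    (hmono : Monotone Km ∨ Antitone Km)
    (L : Set Ann) (hLc : IsCompact L)
    (hlim : Tendsto (fun m => EMetric.hausdorffEdist (K m) L) atTop (𝓝 0)) :
    interior L = ∅ ∧ (Monotone Km → L = relBd (⋃ m, Km m)) := by
  have h m : IsFrontierTriple (K m) (Km m) (Kp m) :=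
    ⟨(hfr m).1.2.2.1, (hfr m).1.2.2.2.1, (hfr m).2.1, (hfr m).2.2⟩
  have hrel (hm : Monotone Km) : L = relBd (⋃ m, Km m) :=
    IsFrontierTriple.eq_relBd_iUnion_of_tendsto h hdisj hm hLc.isClosed hlim
  refine ⟨?_, hrel⟩
  rcases hmono with hm | ha
  · rw [hrel hm]
    exact interior_relBd_eq_empty _
  · rw [IsFrontierTriple.eq_relBd_iUnion_of_tendsto (fun m => (h m).symm) hdisj
      (IsFrontierTriple.monotone_right_of_antitone_left h ha) hLc.isClosed hlim]
    exact interior_relBd_eq_empty _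
end
end
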